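/- arXiv:1506.03613 — 3 statements merged into one kernel-verified Lean document; each statement's English description precedes it below -/
import Mathlib

section
/- For every finite, simple, connected, undirected graph G and every positive integer K: the cop number c(G) equals K if and only if the concurrent cop number c̃(G) equals K. Equivalently, c̃(G) = c(G). -/
open Finset Filter

noncomputable section

variable {V : Type*} [Fintype V] [DecidableEq V]

/-- The closed neighborhood `N[u]` of a vertex `u`: `u` together with its neighbors. -/
def nbhd (G : SimpleGraph V) [DecidableRel G.Adj] (u : V) : Finset V :=
  insert u (G.neighborFinset u)

lemma nbhd_nonempty (G : SimpleGraph V) [DecidableRel G.Adj] (u : V) :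
    (nbhd G u).Nonempty :=
  ⟨u, Finset.mem_insert_self u _⟩

/-! ### The turn-based cops and robber game (TBCR) with `K` cops -/

/-- A position of the `K`-cop game: the cops' locations and the robber's location. -/
abbrev PosK (V : Type*) (K : ℕ) := (Fin K → V) × V

/-- A (deterministic, history-dependent) cop strategy for TBCR: an initial placement
of the `K` cops, and a move function from histories of completed rounds. -/
abbrev TBCop (V : Type*) (K : ℕ) := (Fin K → V) × (List (PosK V K) → Fin K → V)

/-- A (deterministic, history-dependent) robber strategy for TBCR: an initial placement
(seeing the cops' placement), and a move function from histories of completed rounds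
together with the cops' fresh move (the cop player moves first in each round). -/
abbrev TBRob (V : Type*) (K : ℕ) := ((Fin K → V) → V) × (List (PosK V K) → (Fin K → V) → V)

/-- The history of completed rounds of TBCR after round `t`; each token must move within its
closed neighborhood (attempted illegal moves leave the token in place). -/
def tbPlay (G : SimpleGraph V) [DecidableRel G.Adj] {K : ℕ}
    (sc : TBCop V K) (sr : TBRob V K) : ℕ → List (PosK V K)
  | 0 => [(sc.1, sr.1 sc.1)]
  | (t+1) =>
    let h := tbPlay G sc sr t
    let p := h.getLast?.getD (sc.1, sr.1 sc.1)
    let c' : Fin K → V := fun i => if sc.2 h i ∈ nbhd G (p.1 i) then sc.2 h i else p.1 i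
    let w := sr.2 h c'
    h ++ [(c', if w ∈ nbhd G p.2 then w else p.2)]

/-- The position of the TBCR game at the end of round `t`. -/
def tbPos (G : SimpleGraph V) [DecidableRel G.Adj] {K : ℕ}
    (sc : TBCop V K) (sr : TBRob V K) (t : ℕ) : PosK V K :=
  (tbPlay G sc sr t).getLast?.getD (sc.1, sr.1 sc.1)

/-- The robber is captured in TBCR: at some time a cop occupies the robber's current
vertex (either at the end of a round, or just after the cops' half of a round). -/
def tbCaptured (G : SimpleGraph V) [DecidableRel G.Adj] {K : ℕ}
    (sc : TBCop V K) (sr : TBRob V K) : Prop :=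
  ∃ t : ℕ, ∃ i : Fin K,
    (tbPos G sc sr t).1 i = (tbPos G sc sr t).2 ∨
    (tbPos G sc sr (t+1)).1 i = (tbPos G sc sr t).2

/-- `K` cops suffice in the turn-based game: the cop player has a strategy guaranteeing
capture against every robber strategy. -/
def tbCopWin (G : SimpleGraph V) [DecidableRel G.Adj] (K : ℕ) : Prop :=
  ∃ sc : TBCop V K, ∀ sr : TBRob V K, tbCaptured G sc sr

/-- The cop number `c(G)`: the minimum `K` for which the cop player wins TBCR. -/
def copNumber (G : SimpleGraph V) [DecidableRel G.Adj] : ℕ :=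
  sInf {K | tbCopWin G K}

/-! ### The concurrent cops and robber game (CCCR) with `K` cops -/

/-- A randomized cop strategy in CCCR: to each finite history it assigns a probability
distribution over the cops' next moves. -/
abbrev CCCop (V : Type*) (K : ℕ) := List (PosK V K) → PMF (Fin K → V)

/-- A randomized robber strategy in CCCR. -/
abbrev CCRob (V : Type*) (K : ℕ) := List (PosK V K) → PMF V

/-- A strategy is memoryless if the distribution it assigns depends only on the
current (i.e. most recent) position. -/
def MemorylessK {K : ℕ} (π : List (PosK V K) → PMF (Fin K → V)) : Prop :=
  ∀ h₁ h₂ : List (PosK V K), h₁.getLast? = h₂.getLast? → π h₁ = π h₂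

/-- The CCCR transition function for `K` cops: both players move simultaneously, each
token within its closed neighborhood (illegal moves are ignored); a capture position is
absorbing; if a cop and the robber swap adjacent vertices, the robber is captured
\"en passant\". -/
def ccStep (G : SimpleGraph V) [DecidableRel G.Adj] {K : ℕ}
    (p : PosK V K) (u : Fin K → V) (w : V) : PosK V K :=
  if ∃ i, p.1 i = p.2 then p
  else
    let u' : Fin K → V := fun i => if u i ∈ nbhd G (p.1 i) then u i else p.1 i
    let w' : V := if w ∈ nbhd G p.2 then w else p.2
    if ∃ i, u' i = p.2 ∧ w' = p.1 i then (u', p.2) else (u', w')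

/-- The distribution over histories of the first `t+1` positions of CCCR, induced by a
pair of randomized strategies and an initial position. -/
def ccPlay (G : SimpleGraph V) [DecidableRel G.Adj] {K : ℕ}
    (πC : CCCop V K) (πR : CCRob V K) (init : PosK V K) : ℕ → PMF (List (PosK V K))
  | 0 => PMF.pure [init]
  | (t+1) => (ccPlay G πC πR init t).bind fun h =>
      (πC h).bind fun u => (πR h).bind fun w =>
        PMF.pure (h ++ [ccStep G (h.getLast?.getD init) u w])

/-- The probability that the robber is still free (not captured) after round `t`. -/
def ccFreeProb (G : SimpleGraph V) [DecidableRel G.Adj] {K : ℕ}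
    (πC : CCCop V K) (πR : CCRob V K) (init : PosK V K) (t : ℕ) : ENNReal :=
  (ccPlay G πC πR init t).toOuterMeasure
    {h | ∀ i, (h.getLast?.getD init).1 i ≠ (h.getLast?.getD init).2}

/-- `K` cops suffice in the concurrent game: the cop player has a strategy ensuring
that, from every initial position and against every robber strategy, capture occurs
with probability one (the set of infinite histories avoiding capture has probability
zero). -/
def ccCopWin (G : SimpleGraph V) [DecidableRel G.Adj] (K : ℕ) : Prop :=
  ∃ πC : CCCop V K, ∀ init : PosK V K, ∀ πR : CCRob V K,
    (⨅ t : ℕ, ccFreeProb G πC πR init t) = 0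

/-- The concurrent cop number `c̃(G)`. -/
def ccopNumber (G : SimpleGraph V) [DecidableRel G.Adj] : ℕ :=
  sInf {K | ccCopWin G K}

/-!
Both games are decided by the same backward induction. Call a position `(C, r)`, robber to
move, cop-winning (`copWinIn`) if every robber step either lands in the closed neighborhood of
a cop or can be answered by a cop step to a cop-winning position of smaller rank.

If every position is cop-winning, turn-based cops win by decreasing the rank, and concurrent
cops moving uniformly at random play a rank-decreasing reply to whatever the robber does with
probability at least `|V| ^ (-K)` per round, so capture within a bounded number of rounds has
probability bounded below and happens almost surely. If some position is not cop-winning, the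
robber can always step out of the cops' reach to a vertex where no cop step makes the position
cop-winning; this works whether the cops move before him or simultaneously, and connectivity
gives him such a starting vertex against every cop placement.
-/

open scoped ENNReal

namespace PMF

variable {α β : Type*}

lemma toOuterMeasure_add_compl (p : PMF α) (s : Set α) :
    p.toOuterMeasure s + p.toOuterMeasure sᶜ = 1 := by
  rw [toOuterMeasure_apply, toOuterMeasure_apply, ← ENNReal.tsum_add, ← p.tsum_coe]
  exact tsum_congr fun a => by by_cases ha : a ∈ s <;> simp [ha]

lemma mul_toOuterMeasure_le_toOuterMeasure_bind (p : PMF α) (f : α → PMF β) (s : Set β)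
    (a : α) : p a * (f a).toOuterMeasure s ≤ (p.bind f).toOuterMeasure s := by
  rw [toOuterMeasure_bind_apply]
  exact ENNReal.le_tsum a

lemma le_toOuterMeasure_bind {p : PMF α} {f : α → PMF β} {s : Set β} {c : ℝ≥0∞}
    (h : ∀ a, c ≤ (f a).toOuterMeasure s) : c ≤ (p.bind f).toOuterMeasure s := by
  rw [toOuterMeasure_bind_apply]
  calc c = ∑' a, p a * c := by rw [ENNReal.tsum_mul_right, p.tsum_coe, one_mul]
    _ ≤ _ := ENNReal.tsum_le_tsum fun a => mul_le_mul_right (h a) _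

lemma toOuterMeasure_bind_le_mul {p : PMF α} {f : α → PMF β} {s : Set α} {t : Set β}
    {c : ℝ≥0∞} (hs : ∀ a ∈ s, (f a).toOuterMeasure t ≤ c)
    (hsc : ∀ a ∉ s, (f a).toOuterMeasure t = 0) :
    (p.bind f).toOuterMeasure t ≤ c * p.toOuterMeasure s := by
  rw [toOuterMeasure_bind_apply, toOuterMeasure_apply, ← ENNReal.tsum_mul_left]
  refine ENNReal.tsum_le_tsum fun a => ?_
  by_cases ha : a ∈ s
  · rw [Set.indicator_of_mem ha, mul_comm c]
    exact mul_le_mul_right (hs a ha) _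
  · simp [hsc a ha]

end PMF

lemma ENNReal.iInf_eq_zero_of_le_mul {f : ℕ → ℝ≥0∞} {c : ℝ≥0∞} (hc : c < 1)
    (T : ℕ) (h0 : f 0 ≤ 1) (hf : ∀ t, f (t + T) ≤ c * f t) : ⨅ t, f t = 0 := by
  have hpow : ∀ m, f (m * T) ≤ c ^ m := by
    intro m
    induction m with
    | zero => simpa using h0
    | succ m ih =>
      calc f ((m + 1) * T) = f (m * T + T) := by rw [Nat.succ_mul]
        _ ≤ c * c ^ m := (hf _).trans (mul_le_mul_right ih c)
        _ = c ^ (m + 1) := (pow_succ' c m).symm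
  refine nonpos_iff_eq_zero.mp <| ge_of_tendsto' (ENNReal.tendsto_pow_atTop_nhds_zero_of_lt_one hc)
    fun m => (iInf_le _ _).trans (hpow m)

namespace CopsAndRobber

open Relation

section Positions

variable (G : SimpleGraph V) [DecidableRel G.Adj] {K : ℕ}

def moveWithin (a b : V) : V := if b ∈ nbhd G a then b else a

def copReach (C : Fin K → V) : Finset V := univ.biUnion fun i => nbhd G (C i)

def CopStep (C C' : Fin K → V) : Prop := ∀ i, C' i ∈ nbhd G (C i)

def IsCapture (p : PosK V K) : Prop := ∃ i, p.1 i = p.2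

/-- Positions `(C, r)` with the robber to move from which the cops capture within `k` rounds:
a robber step into `copReach G C` is caught at once, any other one is answered by a cop step
into `copWinIn G (k - 1)`. -/
def copWinIn : ℕ → Set (PosK V K)
  | 0 => ∅
  | k + 1 => {p | ∀ w ∈ nbhd G p.2, w ∉ copReach G p.1 →
      ∃ C', CopStep G p.1 C' ∧ (C', w) ∈ copWinIn k}

def CopWinPos (p : PosK V K) : Prop := ∃ k, p ∈ copWinIn G k

def copRank (p : PosK V K) : ℕ := sInf {k | p ∈ copWinIn G k}

def RobberSafe (p : PosK V K) : Prop :=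
  p.2 ∉ copReach G p.1 ∧ ∀ C', CopStep G p.1 C' → ¬ CopWinPos G (C', p.2)

variable {G}

lemma mem_nbhd_self (u : V) : u ∈ nbhd G u := mem_insert_self u _

lemma moveWithin_mem (a b : V) : moveWithin G a b ∈ nbhd G a := by
  unfold moveWithin
  split_ifs with h
  exacts [h, mem_nbhd_self a]

lemma moveWithin_of_mem {a b : V} (h : b ∈ nbhd G a) : moveWithin G a b = b := if_pos h

lemma mem_copReach {C : Fin K → V} {v : V} :
    v ∈ copReach G C ↔ ∃ i, v ∈ nbhd G (C i) := by
  simp [copReach]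

lemma CopStep.refl (C : Fin K → V) : CopStep G C C := fun i => mem_nbhd_self (C i)

lemma CopStep.mem_copReach {C C' : Fin K → V} (h : CopStep G C C') (i : Fin K) :
    C' i ∈ copReach G C :=
  CopsAndRobber.mem_copReach.2 ⟨i, h i⟩

lemma copStep_moveWithin (C u : Fin K → V) : CopStep G C fun i => moveWithin G (C i) (u i) :=
  fun i => moveWithin_mem (C i) (u i)

lemma copStep_update {C : Fin K → V} {j : Fin K} {b : V} (h : b ∈ nbhd G (C j)) :
    CopStep G C (Function.update C j b) := by
  intro i
  rcases eq_or_ne i j with rfl | hij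
  · rwa [Function.update_self]
  · rw [Function.update_of_ne hij]
    exact mem_nbhd_self (C i)

lemma reflTransGen_copStep (hconn : G.Connected) (C C' : Fin K → V) :
    ReflTransGen (CopStep G) C C' := by
  classical
  suffices ∀ s : Finset (Fin K), ReflTransGen (CopStep G) C (s.piecewise C' C) by
    simpa using this univ
  intro s
  induction s using Finset.induction with
  | empty => simp [ReflTransGen.refl]
  | insert j s _ ih =>
    refine ih.trans ?_
    have hadj : ∀ a b, G.Adj a b → CopStep G (Function.update (s.piecewise C' C) j a)
        (Function.update (s.piecewise C' C) j b) := fun a b hab => by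
      have := copStep_update (C := Function.update (s.piecewise C' C) j a) (j := j) (b := b)
        (by rw [Function.update_self]; exact mem_insert_of_mem ((G.mem_neighborFinset a b).2 hab))
      rwa [Function.update_idem] at this
    have hwalk := ReflTransGen.lift _ hadj _ _ <| (SimpleGraph.reachable_iff_reflTransGen _ _).1 <|
      hconn.preconnected (s.piecewise C' C j) (C' j)
    rwa [Function.onFun, Function.update_eq_self, ← Finset.piecewise_insert] at hwalk

lemma copWinIn_mono : Monotone (copWinIn G (K := K)) := by
  refine monotone_nat_of_le_succ fun k => ?_
  induction k with
  | zero => simp [copWinIn]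
  | succ k ih =>
    intro p hp w hw hwC
    obtain ⟨C', hC', hmem⟩ := hp w hw hwC
    exact ⟨C', hC', ih hmem⟩

lemma copWinPos_of_forall_exists {p : PosK V K}
    (h : ∀ w ∈ nbhd G p.2, w ∉ copReach G p.1 →
      ∃ C', CopStep G p.1 C' ∧ CopWinPos G (C', w)) :
    CopWinPos G p := by
  have : ∀ w, ∃ k, w ∈ nbhd G p.2 → w ∉ copReach G p.1 →
      ∃ C', CopStep G p.1 C' ∧ (C', w) ∈ copWinIn G k := fun w => by
    by_cases hw : w ∈ nbhd G p.2 ∧ w ∉ copReach G p.1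
    · obtain ⟨C', hC', k, hk⟩ := h w hw.1 hw.2
      exact ⟨k, fun _ _ => ⟨C', hC', hk⟩⟩
    · exact ⟨0, fun h₁ h₂ => absurd ⟨h₁, h₂⟩ hw⟩
  choose k hk using this
  refine ⟨univ.sup k + 1, fun w hw hwC => ?_⟩
  obtain ⟨C', hC', hmem⟩ := hk w hw hwC
  exact ⟨C', hC', copWinIn_mono (le_sup (mem_univ w)) hmem⟩

lemma exists_robberSafe_of_not_copWinPos {p : PosK V K} (hp : ¬ CopWinPos G p) :
    ∃ w ∈ nbhd G p.2, RobberSafe G (p.1, w) := by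
  contrapose! hp
  exact copWinPos_of_forall_exists fun w hw hwC => by simpa [RobberSafe, hwC] using hp w hw

lemma exists_escape_strategy :
    ∃ esc : PosK V K → V,
      ∀ p, ¬ CopWinPos G p → esc p ∈ nbhd G p.2 ∧ RobberSafe G (p.1, esc p) := by
  have : ∀ p : PosK V K, ∃ w, ¬ CopWinPos G p → w ∈ nbhd G p.2 ∧ RobberSafe G (p.1, w) :=
    fun p => by
      by_cases hp : CopWinPos G p
      · exact ⟨p.2, fun h => absurd hp h⟩
      · obtain ⟨w, hw, hsafe⟩ := exists_robberSafe_of_not_copWinPos hp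
        exact ⟨w, fun _ => ⟨hw, hsafe⟩⟩
  exact ⟨_, fun p => (this p).choose_spec⟩

lemma RobberSafe.not_isCapture {C C' : Fin K → V} {w : V} (h : RobberSafe G (C, w))
    (hC : CopStep G C C') : ¬ IsCapture (C', w) :=
  fun ⟨i, hi⟩ => h.1 (hi ▸ hC.mem_copReach i)

/-- Cop-winning positions propagate backwards along cop steps, and by connectivity every cop
placement reaches `C`. -/
lemma copWinPos_of_forall_robber (hconn : G.Connected) {C : Fin K → V}
    (hC : ∀ r, CopWinPos G (C, r)) (p : PosK V K) : CopWinPos G p := by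
  suffices ∀ D, ReflTransGen (CopStep G) D C → ∀ r, CopWinPos G (D, r) from
    this p.1 (reflTransGen_copStep hconn _ _) p.2
  intro D hD
  induction hD using ReflTransGen.head_induction_on with
  | refl => exact hC
  | head hstep _ ih => exact fun r => copWinPos_of_forall_exists fun w _ _ => ⟨_, hstep, ih w⟩

lemma exists_forall_mem_copWinIn (h : ∀ p : PosK V K, CopWinPos G p) :
    ∃ T, ∀ p : PosK V K, p ∈ copWinIn G T := by
  choose k hk using h
  exact ⟨univ.sup k, fun p => copWinIn_mono (le_sup (mem_univ p)) (hk p)⟩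

lemma mem_copWinIn_copRank {p : PosK V K} (h : CopWinPos G p) : p ∈ copWinIn G (copRank G p) :=
  Nat.sInf_mem h

lemma copRank_le {p : PosK V K} {k : ℕ} (h : p ∈ copWinIn G k) : copRank G p ≤ k :=
  Nat.sInf_le h

lemma exists_copStep_copRank_lt {p : PosK V K} (hp : CopWinPos G p) {w : V}
    (hw : w ∈ nbhd G p.2) (hwC : w ∉ copReach G p.1) :
    ∃ C', CopStep G p.1 C' ∧ copRank G (C', w) < copRank G p := by
  have hmem := mem_copWinIn_copRank hp
  obtain ⟨k, hk⟩ : ∃ k, copRank G p = k + 1 :=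
    Nat.exists_eq_succ_of_ne_zero fun h0 => by simp [h0, copWinIn] at hmem
  rw [hk] at hmem ⊢
  obtain ⟨C', hC', hC'k⟩ := hmem w hw hwC
  exact ⟨C', hC', Nat.lt_succ_of_le (copRank_le hC'k)⟩

lemma exists_copStep_forall_le (f : (Fin K → V) → ℕ) (C : Fin K → V) :
    ∃ C', CopStep G C C' ∧ ∀ C'', CopStep G C C'' → f C' ≤ f C'' := by
  classical
  obtain ⟨C', hC', hmin⟩ := exists_min_image (univ.filter (CopStep G C)) f
    ⟨C, by simpa using CopStep.refl C⟩
  exact ⟨C', (mem_filter.1 hC').2, fun C'' hC'' => hmin C'' (by simpa using hC'')⟩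

end Positions

section TurnBased

variable {G : SimpleGraph V} [DecidableRel G.Adj] {K : ℕ} {sc : TBCop V K} {sr : TBRob V K}

lemma getLast?_tbPlay (t : ℕ) : (tbPlay G sc sr t).getLast? = some (tbPos G sc sr t) := by
  cases t <;> simp [tbPlay, tbPos]

lemma getD_tbPlay (t : ℕ) (d : PosK V K) :
    (tbPlay G sc sr t).getLast?.getD d = tbPos G sc sr t := by
  rw [getLast?_tbPlay]
  rfl

lemma tbPos_succ_fst (t : ℕ) :
    (tbPos G sc sr (t + 1)).1 =
      fun i => moveWithin G ((tbPos G sc sr t).1 i) (sc.2 (tbPlay G sc sr t) i) := by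
  simp only [tbPos, tbPlay, List.getLast?_concat, Option.getD_some]
  rfl

lemma tbPos_succ_snd (t : ℕ) :
    (tbPos G sc sr (t + 1)).2 =
      moveWithin G (tbPos G sc sr t).2 (sr.2 (tbPlay G sc sr t) (tbPos G sc sr (t + 1)).1) := by
  rw [tbPos_succ_fst]
  simp only [tbPos, tbPlay, List.getLast?_concat, Option.getD_some]
  rfl

lemma copStep_tbPos_succ (t : ℕ) : CopStep G (tbPos G sc sr t).1 (tbPos G sc sr (t + 1)).1 := by
  rw [tbPos_succ_fst]
  exact copStep_moveWithin _ _

lemma robber_mem_nbhd_tbPos_succ (t : ℕ) :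
    (tbPos G sc sr (t + 1)).2 ∈ nbhd G (tbPos G sc sr t).2 := by
  rw [tbPos_succ_snd]
  exact moveWithin_mem _ _

theorem not_tbCopWin_of_not_copWinPos (hconn : G.Connected) {p : PosK V K}
    (hp : ¬ CopWinPos G p) : ¬ tbCopWin G K := by
  rintro ⟨sc, hsc⟩
  obtain ⟨esc, hesc⟩ := exists_escape_strategy (G := G) (K := K)
  have : ∀ C : Fin K → V, ∃ y, ¬ CopWinPos G (C, y) := fun C => by
    by_contra! h
    exact hp (copWinPos_of_forall_robber hconn h p)
  choose y hy using this
  let sr : TBRob V K :=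
    (fun C => esc (C, y C), fun h C' => esc (C', (h.getLast?.getD (C', y C')).2))
  have hsafe : ∀ t, RobberSafe G (tbPos G sc sr t) := by
    intro t
    induction t with
    | zero => exact (hesc _ (hy sc.1)).2
    | succ t ih =>
      have hesc' := hesc _ (ih.2 _ (copStep_tbPos_succ t))
      have hrobber : (tbPos G sc sr (t + 1)).2 =
          esc ((tbPos G sc sr (t + 1)).1, (tbPos G sc sr t).2) := by
        rw [tbPos_succ_snd]
        simp only [sr, getD_tbPlay]
        exact moveWithin_of_mem hesc'.1
      rw [← Prod.mk.eta (p := tbPos G sc sr (t + 1)), hrobber]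
      exact hesc'.2
  obtain ⟨t, i, hcap | hcap⟩ := hsc sr
  · exact (hsafe t).1 (hcap ▸ (CopStep.refl _).mem_copReach i)
  · exact (hsafe t).1 (hcap ▸ (copStep_tbPos_succ t).mem_copReach i)

theorem tbCopWin_of_forall_copWinPos [Nonempty V] (hA : ∀ p : PosK V K, CopWinPos G p) :
    tbCopWin G K := by
  choose best hbest_step hbest_min using fun p : PosK V K =>
    exists_copStep_forall_le (G := G) (fun C' => copRank G (C', p.2)) p.1
  let v₀ : V := Classical.arbitrary V
  let copMove (p : PosK V K) (i : Fin K) : V := if p.2 ∈ nbhd G (p.1 i) then p.2 else best p i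
  let sc : TBCop V K := (fun _ => v₀, fun h => copMove (h.getLast?.getD (fun _ => v₀, v₀)))
  refine ⟨sc, fun sr => ?_⟩
  by_contra hfree
  simp only [tbCaptured, not_exists, not_or] at hfree
  have hcops : ∀ t, (tbPos G sc sr (t + 1)).1 = fun i =>
      moveWithin G ((tbPos G sc sr t).1 i) (copMove (tbPos G sc sr t) i) := fun t => by
    rw [tbPos_succ_fst, show sc.2 (tbPlay G sc sr t) = copMove (tbPos G sc sr t) from
      congrArg copMove (getD_tbPlay t _)]
  have hout : ∀ t, (tbPos G sc sr t).2 ∉ copReach G (tbPos G sc sr t).1 := fun t hin => by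
    obtain ⟨i, hi⟩ := mem_copReach.1 hin
    refine (hfree t i).2 ?_
    rw [hcops]
    simp only [copMove, if_pos hi]
    exact moveWithin_of_mem hi
  have hbest : ∀ t, (tbPos G sc sr (t + 1)).1 = best (tbPos G sc sr t) := fun t => by
    rw [hcops]
    funext i
    have hi : (tbPos G sc sr t).2 ∉ nbhd G ((tbPos G sc sr t).1 i) :=
      fun h => hout t (mem_copReach.2 ⟨i, h⟩)
    simp only [copMove, if_neg hi]
    exact moveWithin_of_mem (hbest_step _ i)
  let rank (t : ℕ) : ℕ := copRank G ((tbPos G sc sr (t + 1)).1, (tbPos G sc sr t).2)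
  have hdesc : ∀ t, rank (t + 1) < rank t := fun t => by
    obtain ⟨C', hC', hlt⟩ := exists_copStep_copRank_lt
      (hA ((tbPos G sc sr (t + 1)).1, (tbPos G sc sr t).2))
      (robber_mem_nbhd_tbPos_succ t) (hout (t + 1))
    calc rank (t + 1) = copRank G (best (tbPos G sc sr (t + 1)), (tbPos G sc sr (t + 1)).2) :=
          congrArg (fun C => copRank G (C, (tbPos G sc sr (t + 1)).2)) (hbest (t + 1))
      _ ≤ copRank G (C', (tbPos G sc sr (t + 1)).2) := hbest_min _ C' hC'
      _ < rank t := hlt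
  exact not_strictAnti_of_wellFoundedLT rank (strictAnti_nat_of_succ_lt hdesc)

end TurnBased

section Concurrent

variable {G : SimpleGraph V} [DecidableRel G.Adj] {K : ℕ}

lemma ccStep_of_isCapture {p : PosK V K} (hp : IsCapture p) (u : Fin K → V) (w : V) :
    ccStep G p u w = p :=
  if_pos hp

lemma ccStep_of_not_isCapture {p : PosK V K} (hp : ¬ IsCapture p) (u : Fin K → V) (w : V) :
    ccStep G p u w =
      if ∃ i, moveWithin G (p.1 i) (u i) = p.2 ∧ moveWithin G p.2 w = p.1 i
      then (fun i => moveWithin G (p.1 i) (u i), p.2)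
      else (fun i => moveWithin G (p.1 i) (u i), moveWithin G p.2 w) :=
  if_neg hp

lemma ccStep_moveWithin (p : PosK V K) (u : Fin K → V) (w : V) :
    ccStep G p u (moveWithin G p.2 w) = ccStep G p u w := by
  unfold ccStep moveWithin
  split_ifs <;> simp_all [mem_nbhd_self]

lemma ccStep_of_not_mem_copReach {p : PosK V K} (hp : ¬ IsCapture p) {w : V}
    (hw : w ∈ nbhd G p.2) (hwC : w ∉ copReach G p.1) (u : Fin K → V) :
    ccStep G p u w = (fun i => moveWithin G (p.1 i) (u i), w) := by
  have hpass : ¬ ∃ i, moveWithin G (p.1 i) (u i) = p.2 ∧ w = p.1 i :=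
    fun ⟨i, _, hi⟩ => hwC (hi ▸ (CopStep.refl p.1).mem_copReach i)
  rw [ccStep_of_not_isCapture hp, moveWithin_of_mem hw, if_neg hpass]

lemma isCapture_ccStep {p : PosK V K} (hp : ¬ IsCapture p) {u : Fin K → V}
    (hu : CopStep G p.1 u) {w : V} (hw : w ∈ nbhd G p.2) {j : Fin K} (hj : u j = w) :
    IsCapture (ccStep G p u w) := by
  have hmove : (fun i => moveWithin G (p.1 i) (u i)) = u := funext fun i => moveWithin_of_mem (hu i)
  rw [ccStep_of_not_isCapture hp, moveWithin_of_mem hw, hmove]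
  split_ifs with hpass
  · obtain ⟨i, hi, -⟩ := hpass
    exact ⟨i, (moveWithin_of_mem (hu i)).symm.trans hi⟩
  · exact ⟨j, hj⟩

lemma exists_copStep_ccStep_mem {p : PosK V K} (hp : ¬ IsCapture p) {k : ℕ}
    (hk : p ∈ copWinIn G (k + 1)) (w : V) :
    ∃ u, CopStep G p.1 u ∧
      (IsCapture (ccStep G p u w) ∨ ccStep G p u w ∈ copWinIn G k) := by
  simp only [← ccStep_moveWithin p _ w]
  have hw := moveWithin_mem (G := G) p.2 w
  by_cases hwC : moveWithin G p.2 w ∈ copReach G p.1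
  · obtain ⟨j, hj⟩ := mem_copReach.1 hwC
    exact ⟨_, copStep_update hj, Or.inl (isCapture_ccStep hp (copStep_update hj) hw
      (Function.update_self _ _ _))⟩
  · obtain ⟨C', hC', hmem⟩ := hk _ hw hwC
    refine ⟨C', hC', Or.inr ?_⟩
    rwa [ccStep_of_not_mem_copReach hp hw hwC, funext fun i => moveWithin_of_mem (hC' i)]

variable (G) (πC : CCCop V K) (πR : CCRob V K) (init : PosK V K)

def ccRound (h : List (PosK V K)) : PMF (List (PosK V K)) :=
  (πC h).bind fun u => (πR h).bind fun w => PMF.pure (h ++ [ccStep G (h.getLast?.getD init) u w])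

def ccRounds : ℕ → List (PosK V K) → PMF (List (PosK V K))
  | 0, h => PMF.pure h
  | k + 1, h => (ccRounds k h).bind (ccRound G πC πR init)

def capturedHistories : Set (List (PosK V K)) := {h | IsCapture (h.getLast?.getD init)}

variable {G πC πR init}

lemma ccPlay_eq_ccRounds (t : ℕ) :
    ccPlay G πC πR init t = ccRounds G πC πR init t [init] := by
  induction t with
  | zero => rfl
  | succ t ih => rw [ccPlay, ih]; rfl

lemma ccRounds_add (a b : ℕ) (h : List (PosK V K)) :
    ccRounds G πC πR init (a + b) h =
      (ccRounds G πC πR init a h).bind (ccRounds G πC πR init b) := by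
  induction b with
  | zero => exact (PMF.bind_pure _).symm
  | succ b ih =>
    rw [← add_assoc, ccRounds, ih, PMF.bind_bind]
    rfl

lemma ccPlay_add (t k : ℕ) :
    ccPlay G πC πR init (t + k) = (ccPlay G πC πR init t).bind (ccRounds G πC πR init k) := by
  rw [ccPlay_eq_ccRounds, ccPlay_eq_ccRounds, ccRounds_add]

lemma ccRounds_succ' (k : ℕ) (h : List (PosK V K)) :
    ccRounds G πC πR init (k + 1) h = (πC h).bind fun u => (πR h).bind fun w =>
      ccRounds G πC πR init k (h ++ [ccStep G (h.getLast?.getD init) u w]) := by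
  rw [add_comm, ccRounds_add, ccRounds, ccRounds, PMF.pure_bind, ccRound, PMF.bind_bind]
  simp only [PMF.bind_bind, PMF.pure_bind]

lemma ccFreeProb_eq (t : ℕ) :
    ccFreeProb G πC πR init t =
      (ccPlay G πC πR init t).toOuterMeasure (capturedHistories init)ᶜ := by
  simp [ccFreeProb, capturedHistories, IsCapture, Set.compl_ofPred]

lemma support_ccRounds_invariant (P : PosK V K → Prop)
    (hstep : ∀ h, P (h.getLast?.getD init) →
      ∀ u ∈ (πC h).support, ∀ w ∈ (πR h).support,
      P (ccStep G (h.getLast?.getD init) u w))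
    (k : ℕ) {h : List (PosK V K)} (hh : P (h.getLast?.getD init)) :
    ∀ h' ∈ (ccRounds G πC πR init k h).support, P (h'.getLast?.getD init) := by
  induction k with
  | zero => simpa [ccRounds] using hh
  | succ k ih =>
    intro h' hh'
    simp only [ccRounds, ccRound, PMF.mem_support_bind_iff, PMF.support_pure,
      Set.mem_singleton_iff] at hh'
    obtain ⟨h'', hh'', u, hu, w, hw, rfl⟩ := hh'
    simpa using hstep h'' (ih h'' hh'') u hu w hw

lemma support_ccRounds_subset_capturedHistories (k : ℕ) {h : List (PosK V K)}
    (hh : IsCapture (h.getLast?.getD init)) :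
    (ccRounds G πC πR init k h).support ⊆ capturedHistories init :=
  support_ccRounds_invariant IsCapture
    (fun _ hcap _ _ _ _ => (ccStep_of_isCapture (G := G) hcap _ _).symm ▸ hcap) k hh

theorem not_ccCopWin_of_not_copWinPos {p : PosK V K} (hp : ¬ CopWinPos G p) : ¬ ccCopWin G K := by
  rintro ⟨πC, hπC⟩
  obtain ⟨esc, hesc⟩ := exists_escape_strategy (G := G) (K := K)
  let init : PosK V K := (p.1, esc p)
  let πR : CCRob V K := fun h => PMF.pure (esc (h.getLast?.getD init))
  have hinv : ∀ t, ∀ h ∈ (ccPlay G πC πR init t).support,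
      ¬ IsCapture (h.getLast?.getD init) ∧ ¬ CopWinPos G (h.getLast?.getD init) := by
    intro t
    rw [ccPlay_eq_ccRounds]
    refine support_ccRounds_invariant (fun q => ¬ IsCapture q ∧ ¬ CopWinPos G q) ?_ t ?_
    · rintro h ⟨hfree, hq⟩ u - w hw
      rw [PMF.support_pure, Set.mem_singleton_iff] at hw
      obtain ⟨hmem, hsafe⟩ := hesc _ hq
      rw [hw, ccStep_of_not_mem_copReach hfree hmem hsafe.1]
      exact ⟨hsafe.not_isCapture (copStep_moveWithin _ _), hsafe.2 _ (copStep_moveWithin _ _)⟩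
    · have hsafe := (hesc p hp).2
      exact ⟨hsafe.not_isCapture (CopStep.refl _), hsafe.2 _ (CopStep.refl _)⟩
  have hfree : ∀ t, ccFreeProb G πC πR init t = 1 := fun t => by
    rw [ccFreeProb_eq, PMF.toOuterMeasure_apply_eq_one_iff]
    exact fun h hh => (hinv t h hh).1
  simpa [hfree] using hπC init πR

/-- Illegal moves count as staying put (see `ccStep`), so under this strategy every legal joint
move of the cops has probability `|V| ^ (-K)`. -/
def uniformCops (V : Type*) [Fintype V] [Nonempty V] (K : ℕ) : CCCop V K :=
  fun _ => PMF.uniformOfFintype (Fin K → V)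

lemma le_ccRounds_capturedHistories [Nonempty V] (k : ℕ) (h : List (PosK V K))
    (hk : IsCapture (h.getLast?.getD init) ∨ h.getLast?.getD init ∈ copWinIn G k) :
    (Fintype.card (Fin K → V) : ℝ≥0∞)⁻¹ ^ k ≤
      (ccRounds G (uniformCops V K) πR init k h).toOuterMeasure (capturedHistories init) := by
  have hcaptured : ∀ k h, IsCapture (h.getLast?.getD init) →
      (Fintype.card (Fin K → V) : ℝ≥0∞)⁻¹ ^ k ≤
        (ccRounds G (uniformCops V K) πR init k h).toOuterMeasure (capturedHistories init) :=
    fun k h hcap => by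
      rw [(PMF.toOuterMeasure_apply_eq_one_iff _ _).2
        (support_ccRounds_subset_capturedHistories k hcap)]
      exact pow_le_one₀ zero_le (ENNReal.inv_le_one.2 (by exact_mod_cast Fintype.card_pos))
  induction k generalizing h with
  | zero =>
    rcases hk with hcap | hk
    · exact hcaptured 0 h hcap
    · simp [copWinIn] at hk
  | succ k ih =>
    by_cases hcap : IsCapture (h.getLast?.getD init)
    · exact hcaptured _ h hcap
    rw [ccRounds_succ', PMF.bind_comm]
    refine PMF.le_toOuterMeasure_bind fun w => ?_
    obtain ⟨u, -, hu⟩ := exists_copStep_ccStep_mem hcap (hk.resolve_left hcap) w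
    calc (Fintype.card (Fin K → V) : ℝ≥0∞)⁻¹ ^ (k + 1)
        = uniformCops V K h u * (Fintype.card (Fin K → V) : ℝ≥0∞)⁻¹ ^ k := by
          rw [uniformCops, PMF.uniformOfFintype_apply, pow_succ']
      _ ≤ uniformCops V K h u * (ccRounds G (uniformCops V K) πR init k
            (h ++ [ccStep G (h.getLast?.getD init) u w])).toOuterMeasure (capturedHistories init) :=
          mul_le_mul_right (ih _ (by simpa using hu)) _
      _ ≤ _ := PMF.mul_toOuterMeasure_le_toOuterMeasure_bind _ _ _ u

theorem ccCopWin_of_forall_copWinPos [Nonempty V] (hA : ∀ p : PosK V K, CopWinPos G p) :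
    ccCopWin G K := by
  obtain ⟨T, hT⟩ := exists_forall_mem_copWinIn hA
  refine ⟨uniformCops V K, fun init πR => ?_⟩
  set ε : ℝ≥0∞ := (Fintype.card (Fin K → V) : ℝ≥0∞)⁻¹
  have hε : ε ^ T ≠ 0 := pow_ne_zero _ (ENNReal.inv_ne_zero.2 (ENNReal.natCast_ne_top _))
  refine ENNReal.iInf_eq_zero_of_le_mul (ENNReal.sub_lt_self ENNReal.one_ne_top one_ne_zero hε) T
    ?_ fun t => ?_
  · rw [ccFreeProb_eq, ← PMF.toOuterMeasure_add_compl _ (capturedHistories init)]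
    exact le_add_self
  rw [ccFreeProb_eq, ccFreeProb_eq, ccPlay_add]
  refine PMF.toOuterMeasure_bind_le_mul (fun h _ => ?_) fun h hcap => ?_
  · have hsum := PMF.toOuterMeasure_add_compl
      (ccRounds G (uniformCops V K) πR init T h) (capturedHistories init)
    refine ENNReal.le_sub_of_add_le_left (ENNReal.pow_ne_top (ENNReal.inv_ne_top.2 ?_)) ?_
    · exact_mod_cast Fintype.card_ne_zero
    · rw [← hsum]
      exact add_le_add_left (le_ccRounds_capturedHistories T h (Or.inr (hT _))) _
  · rw [PMF.toOuterMeasure_apply_eq_zero_iff, Set.disjoint_compl_right_iff_subset]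
    exact support_ccRounds_subset_capturedHistories T (not_not.1 hcap)

end Concurrent

section Characterization

variable {G : SimpleGraph V} [DecidableRel G.Adj] {K : ℕ}

theorem tbCopWin_iff_forall_copWinPos (hconn : G.Connected) :
    tbCopWin G K ↔ ∀ p : PosK V K, CopWinPos G p :=
  haveI := hconn.nonempty
  ⟨fun h _ => by_contra fun hp => not_tbCopWin_of_not_copWinPos hconn hp h,
    tbCopWin_of_forall_copWinPos⟩

theorem ccCopWin_iff_forall_copWinPos [Nonempty V] :
    ccCopWin G K ↔ ∀ p : PosK V K, CopWinPos G p :=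
  ⟨fun h _ => by_contra fun hp => not_ccCopWin_of_not_copWinPos hp h,
    ccCopWin_of_forall_copWinPos⟩

theorem tbCopWin_iff_ccCopWin (hconn : G.Connected) : tbCopWin G K ↔ ccCopWin G K :=
  haveI := hconn.nonempty
  (tbCopWin_iff_forall_copWinPos hconn).trans ccCopWin_iff_forall_copWinPos.symm

end Characterization

end CopsAndRobber

/-- for every finite, simple, connected graph `G` and every positive
integer `K`, the cop number `c(G)` equals `K` if and only if the concurrent cop number
`c̃(G)` equals `K`. -/
theorem copNumber_eq_iff_ccopNumber_eq (G : SimpleGraph V) [DecidableRel G.Adj]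
    (hconn : G.Connected) :
    ∀ K : ℕ, 0 < K → (copNumber G = K ↔ ccopNumber G = K) := by
  have hnum : copNumber G = ccopNumber G :=
    congrArg sInf (Set.ext fun _ => CopsAndRobber.tbCopWin_iff_ccCopWin hconn)
  intro K _
  rw [hnum]
end
end

section
/- For every finite, simple, connected, undirected graph G: if the cop number c(G) equals 1, then the concurrent cop number c̃(G) equals 1; moreover there is a memoryless randomized cop strategy under which, for every initial position and every robber strategy in the concurrent game, capture occurs with probability one. -/
open Finset Filter

noncomputable section

variable {V : Type*} [Fintype V] [DecidableEq V]

/-!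
If one cop wins the turn-based game, then by connectivity he wins it from every start vertex, and
within a uniform number `B` of rounds also when the robber moves first. So in the concurrent game,
for every move of the robber there is a cop move after which the cop needs one round fewer (or
has captured, possibly en passant). A cop moving uniformly at random makes that move with
probability `δ = 1/|V|`, hence captures within `B` rounds with probability at least `δ ^ B` from
any position, and the probability of escaping shrinks by a factor `1 - δ ^ B` every `B` rounds.
-/

open scoped ENNReal

theorem exists_forall_of_monotone {ι : Type*} [Finite ι] {P : ℕ → ι → Prop}
    (hP : ∀ i, Monotone (P · i)) (h : ∀ i, ∃ n, P n i) : ∃ n, ∀ i, P n i :=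
  (Filter.eventually_all.2 fun i =>
    Filter.eventually_atTop.2 ((h i).imp fun _ hn _ hm => hP i hm hn)).exists

theorem ENNReal.iInf_eq_zero_of_add_mul_le {f : ℕ → ℝ≥0∞} {ε : ℝ≥0∞} {B : ℕ} (hf : f 0 ≠ ⊤)
    (hε : ε ≠ 0) (h : ∀ t, f (t + B) + ε * f t ≤ f t) : ⨅ t, f t = 0 := by
  set L := ⨅ t, f t
  have hL : L ≠ ⊤ := ne_top_of_le_ne_top hf (iInf_le f 0)
  have hLL : L + ε * L ≤ L + 0 := by
    rw [add_zero]
    exact le_iInf fun t =>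
      (add_le_add (iInf_le f _) (mul_le_mul_right (iInf_le f t) ε)).trans (h t)
  have hεL : ε * L = 0 := nonpos_iff_eq_zero.1 ((ENNReal.add_le_add_iff_left hL).1 hLL)
  exact (mul_eq_zero.1 hεL).resolve_left hε

namespace PMF

variable {α β : Type*}

theorem tsum_bind_mul (p : PMF α) (q : α → PMF β) (g : β → ℝ≥0∞) :
    ∑' b, p.bind q b * g b = ∑' a, p a * ∑' b, q a b * g b := by
  simp_rw [bind_apply, ← ENNReal.tsum_mul_right, ← ENNReal.tsum_mul_left, mul_assoc]
  exact ENNReal.tsum_comm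

theorem tsum_pure_mul (a : α) (g : α → ℝ≥0∞) : ∑' b, pure a b * g b = g a := by
  simp [pure_apply]

theorem le_tsum_mul_of_forall_le (p : PMF α) {g : α → ℝ≥0∞} {c : ℝ≥0∞} (h : ∀ a, c ≤ g a) :
    c ≤ ∑' a, p a * g a :=
  calc c = ∑' a, p a * c := by rw [ENNReal.tsum_mul_right, tsum_coe, one_mul]
    _ ≤ ∑' a, p a * g a := ENNReal.tsum_le_tsum fun a => mul_le_mul_right (h a) _

theorem le_tsum_mul_tsum_mul_of_forall_exists (p : PMF α) (q : PMF β) {g : α → β → ℝ≥0∞}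
    {c : ℝ≥0∞} (h : ∀ b, ∃ a, c ≤ p a * g a b) :
    c ≤ ∑' a, p a * ∑' b, q b * g a b := by
  simp_rw [← ENNReal.tsum_mul_left, ← mul_assoc, mul_comm (p _) (q _), mul_assoc]
  rw [ENNReal.tsum_comm]
  simp_rw [ENNReal.tsum_mul_left]
  refine q.le_tsum_mul_of_forall_le fun b => ?_
  obtain ⟨a, ha⟩ := h b
  exact ha.trans (ENNReal.le_tsum a)

end PMF

section Pursuit

variable (G : SimpleGraph V) [DecidableRel G.Adj]

lemma mem_nbhd {x y : V} : y ∈ nbhd G x ↔ y = x ∨ G.Adj x y := by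
  simp [nbhd, eq_comm]

lemma self_mem_nbhd (x : V) : x ∈ nbhd G x := Finset.mem_insert_self _ _

/-- Robber to move at `(c, r)`: the cop can force capture within `n` rounds of the turn-based
game. -/
def CopWinsWithin : ℕ → V → V → Prop
  | 0, c, r => c = r
  | n + 1, c, r => c = r ∨ ∀ w ∈ nbhd G r, ∃ u ∈ nbhd G c, CopWinsWithin n u w

/-- Cop to move at `(c, r)`: the cop can force capture in the turn-based game. -/
def CopCanWin (c r : V) : Prop :=
  ∃ c' ∈ nbhd G c, ∃ n, CopWinsWithin G n c' r

variable {G}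

lemma copWinsWithin_self (n : ℕ) (c : V) : CopWinsWithin G n c c := by
  cases n with
  | zero => rfl
  | succ => exact Or.inl rfl

lemma CopWinsWithin.succ {n : ℕ} {c r : V} (h : CopWinsWithin G n c r) :
    CopWinsWithin G (n + 1) c r := by
  induction n generalizing c r with
  | zero => exact Or.inl h
  | succ n ih =>
    rcases h with h | h
    · exact Or.inl h
    · exact Or.inr fun w hw => (h w hw).imp fun u ⟨hu, huw⟩ => ⟨hu, ih huw⟩

lemma copWinsWithin_mono (c r : V) : Monotone fun n => CopWinsWithin G n c r :=
  monotone_nat_of_le_succ fun _ => CopWinsWithin.succ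

lemma exists_escape_of_not_copCanWin {c r c' : V} (h : ¬CopCanWin G c r) (hc' : c' ∈ nbhd G c) :
    c' ≠ r ∧ ∃ w ∈ nbhd G r, ¬CopCanWin G c' w := by
  refine ⟨fun hr => h ⟨c', hc', 0, hr⟩, ?_⟩
  by_contra! hall
  obtain ⟨n, hn⟩ := exists_forall_of_monotone
    (P := fun n w => w ∈ nbhd G r → ∃ u ∈ nbhd G c', CopWinsWithin G n u w)
    (fun w _ _ hnm h hw => (h hw).imp fun u ⟨hu, huw⟩ => ⟨hu, copWinsWithin_mono u w hnm huw⟩)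
    (fun w => if hw : w ∈ nbhd G r then
        (hall w hw).elim fun u ⟨hu, n, huw⟩ => ⟨n, fun _ => ⟨u, hu, huw⟩⟩
      else ⟨0, fun hw' => absurd hw' hw⟩)
  exact h ⟨c', hc', n + 1, Or.inr hn⟩

lemma forall_copWinsWithin_succ_of_adj {n : ℕ} {c c' : V} (hadj : G.Adj c c')
    (h : ∀ r, CopWinsWithin G n c' r) (r : V) : CopWinsWithin G (n + 1) c r :=
  Or.inr fun w _ => ⟨c', (mem_nbhd G).2 (Or.inr hadj), h w⟩

lemma exists_forall_copWinsWithin_of_reachable {c c₀ : V} (hreach : G.Reachable c c₀)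
    (h : ∃ n, ∀ r, CopWinsWithin G n c₀ r) : ∃ n, ∀ r, CopWinsWithin G n c r := by
  obtain ⟨walk⟩ := hreach
  induction walk with
  | nil => exact h
  | cons hadj _ ih =>
    obtain ⟨n, hn⟩ := ih h
    exact ⟨n + 1, forall_copWinsWithin_succ_of_adj hadj hn⟩

lemma exists_forall_copWinsWithin_of_forall_copCanWin {c₀ : V} (h : ∀ r, CopCanWin G c₀ r) :
    ∃ n, ∀ r, CopWinsWithin G n c₀ r := by
  obtain ⟨n, hn⟩ := exists_forall_of_monotone
    (P := fun n r => ∃ c' ∈ nbhd G c₀, CopWinsWithin G n c' r)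
    (fun r _ _ hnm => Exists.imp fun c' ⟨hc', h⟩ => ⟨hc', copWinsWithin_mono c' r hnm h⟩)
    (fun r => (h r).elim fun c' ⟨hc', n, h⟩ => ⟨n, c', hc', h⟩)
  exact ⟨n + 1, fun r => Or.inr fun w _ => hn w⟩

lemma exists_forall_copWinsWithin (hconn : G.Connected) {c₀ : V}
    (h : ∀ r, CopCanWin G c₀ r) : ∃ B, ∀ c r, CopWinsWithin G B c r :=
  exists_forall_of_monotone (P := fun n c => ∀ r, CopWinsWithin G n c r)
    (fun c _ _ hnm h r => copWinsWithin_mono c r hnm (h r))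
    (fun c => exists_forall_copWinsWithin_of_reachable (hconn c c₀)
      (exists_forall_copWinsWithin_of_forall_copCanWin h))

end Pursuit

section TurnBased

variable {G : SimpleGraph V} [DecidableRel G.Adj] {K : ℕ} {sc : TBCop V K} {sr : TBRob V K}

lemma tbPos_succ_fst_mem (t : ℕ) (i : Fin K) :
    (tbPos G sc sr (t + 1)).1 i ∈ nbhd G ((tbPos G sc sr t).1 i) := by
  simp only [tbPos, tbPlay, List.getLast?_concat, Option.getD_some]
  split_ifs with h
  · exact h
  · exact self_mem_nbhd G _

lemma tbPos_succ_snd (t : ℕ) :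
    (tbPos G sc sr (t + 1)).2 =
      if sr.2 (tbPlay G sc sr t) (tbPos G sc sr (t + 1)).1 ∈ nbhd G (tbPos G sc sr t).2
      then sr.2 (tbPlay G sc sr t) (tbPos G sc sr (t + 1)).1 else (tbPos G sc sr t).2 := by
  simp only [tbPos, tbPlay, List.getLast?_concat, Option.getD_some]

/-- The robber who always moves to a position the cop cannot win is never caught. -/
theorem exists_not_tbCaptured (sc : TBCop V 1) {r₀ : V} (h : ¬CopCanWin G (sc.1 0) r₀) :
    ∃ sr : TBRob V 1, ¬tbCaptured G sc sr := by
  classical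
  let flee (c r : V) : V := if hw : ∃ w ∈ nbhd G r, ¬CopCanWin G c w then hw.choose else r
  let sr : TBRob V 1 := (fun _ => r₀, fun hist c => flee (c 0) (hist.getLast?.getD (sc.1, r₀)).2)
  have hinv : ∀ t, ¬CopCanWin G ((tbPos G sc sr t).1 0) (tbPos G sc sr t).2 := by
    intro t
    induction t with
    | zero => exact h
    | succ t ih =>
      have hesc := (exists_escape_of_not_copCanWin ih (tbPos_succ_fst_mem t 0)).2
      have hflee : flee ((tbPos G sc sr (t + 1)).1 0) (tbPos G sc sr t).2 = hesc.choose :=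
        dif_pos hesc
      have hpos : (tbPos G sc sr (t + 1)).2 = hesc.choose := by
        rw [tbPos_succ_snd]
        change (if flee _ (tbPos G sc sr t).2 ∈ nbhd G _ then flee _ (tbPos G sc sr t).2 else _) = _
        rw [hflee, if_pos hesc.choose_spec.1]
      exact hpos ▸ hesc.choose_spec.2
  refine ⟨sr, fun ⟨t, i, hcap⟩ => ?_⟩
  rw [Subsingleton.elim i 0] at hcap
  rcases hcap with hcap | hcap
  · exact hinv t ⟨_, self_mem_nbhd G _, 0, hcap⟩
  · exact (exists_escape_of_not_copCanWin (hinv t) (tbPos_succ_fst_mem t 0)).1 hcap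

theorem exists_forall_copCanWin_of_tbCopWin (h : tbCopWin G 1) :
    ∃ c₀, ∀ r, CopCanWin G c₀ r := by
  obtain ⟨sc, hsc⟩ := h
  refine ⟨sc.1 0, fun r => by_contra fun hr => ?_⟩
  obtain ⟨sr, hsr⟩ := exists_not_tbCaptured sc hr
  exact hsr (hsc sr)

end TurnBased

section Concurrent

variable {G : SimpleGraph V} [DecidableRel G.Adj]

lemma ccStep_of_captured {K : ℕ} {p : PosK V K} (hp : ∃ i, p.1 i = p.2) (u : Fin K → V)
    (w : V) : ccStep G p u w = p :=
  if_pos hp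

/-- The first alternative is a capture, possibly en passant. -/
lemma ccStep_single_cop {p : PosK V 1} (hp : p.1 0 ≠ p.2) {x : V} (hx : x ∈ nbhd G (p.1 0))
    (w : V) :
    (ccStep G p (fun _ => x) w).1 0 = x ∧ ((ccStep G p (fun _ => x) w).2 = x ∨
      (ccStep G p (fun _ => x) w).2 = if w ∈ nbhd G p.2 then w else p.2) := by
  have hu : (fun i : Fin 1 => if x ∈ nbhd G (p.1 i) then x else p.1 i) = fun _ => x :=
    funext fun i => by rw [Fin.fin_one_eq_zero i, if_pos hx]
  simp only [ccStep, Fin.exists_fin_one, if_neg hp, hu]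
  generalize (if w ∈ nbhd G p.2 then w else p.2) = w'
  split_ifs with h
  · exact ⟨rfl, Or.inl h.1.symm⟩
  · exact ⟨rfl, Or.inr rfl⟩

lemma exists_copWinsWithin_ccStep {n : ℕ} {p : PosK V 1}
    (h : CopWinsWithin G (n + 1) (p.1 0) p.2) (w : V) :
    ∃ u, CopWinsWithin G n ((ccStep G p u w).1 0) (ccStep G p u w).2 := by
  by_cases hcap : p.1 0 = p.2
  · refine ⟨fun _ => p.2, ?_⟩
    rw [ccStep_of_captured ⟨0, hcap⟩, hcap]
    exact copWinsWithin_self n _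
  · have hw : (if w ∈ nbhd G p.2 then w else p.2) ∈ nbhd G p.2 := by
      split_ifs with hw
      exacts [hw, self_mem_nbhd G _]
    obtain ⟨x, hx, hxw⟩ := h.resolve_left hcap _ hw
    refine ⟨fun _ => x, ?_⟩
    obtain ⟨hfst, hsnd | hsnd⟩ := ccStep_single_cop hcap hx w <;> rw [hfst, hsnd]
    exacts [copWinsWithin_self n x, hxw]

def uniformCop [Nonempty V] : CCCop V 1 := fun _ => PMF.uniformOfFintype (Fin 1 → V)

omit [DecidableEq V] in
lemma uniformCop_apply [Nonempty V] (h : List (PosK V 1)) (u : Fin 1 → V) :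
    uniformCop h u = (Fintype.card V : ℝ≥0∞)⁻¹ := by
  simp [uniformCop, PMF.uniformOfFintype_apply]

open scoped Classical in
variable (G) in
/-- A lower bound for the probability that `uniformCop` captures within `k` rounds from `p`,
where `δ` stands for `1 / |V|`. -/
def captureBound (δ : ℝ≥0∞) (k : ℕ) (p : PosK V 1) : ℝ≥0∞ :=
  if p.1 0 = p.2 then 1 else if CopWinsWithin G k (p.1 0) p.2 then δ ^ k else 0

lemma pow_le_captureBound {δ : ℝ≥0∞} (hδ : δ ≤ 1) {k : ℕ} {p : PosK V 1}
    (h : CopWinsWithin G k (p.1 0) p.2) : δ ^ k ≤ captureBound G δ k p := by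
  unfold captureBound
  split_ifs
  exacts [pow_le_one₀ zero_le hδ, le_rfl]

lemma captureBound_zero (δ : ℝ≥0∞) (p : PosK V 1) :
    captureBound G δ 0 p = if p.1 0 = p.2 then 1 else 0 := by
  by_cases hp : p.1 0 = p.2 <;> simp [captureBound, CopWinsWithin, hp]

lemma captureBound_of_forall {δ : ℝ≥0∞} {B : ℕ} (hB : ∀ c r, CopWinsWithin G B c r)
    (p : PosK V 1) :
    captureBound G δ B p =
      (if p.1 0 = p.2 then 1 else 0) + δ ^ B * if p.1 0 = p.2 then 0 else 1 := by
  by_cases hp : p.1 0 = p.2 <;> simp [captureBound, hp, hB]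

lemma captureBound_succ_le [Nonempty V] (h : List (PosK V 1)) (ρ : PMF V) (k : ℕ)
    (p : PosK V 1) :
    captureBound G (Fintype.card V)⁻¹ (k + 1) p ≤
      ∑' u, uniformCop h u * ∑' w, ρ w * captureBound G (Fintype.card V)⁻¹ k (ccStep G p u w) := by
  have hδ : (Fintype.card V : ℝ≥0∞)⁻¹ ≤ 1 :=
    ENNReal.inv_le_one.2 (Nat.one_le_cast.2 Fintype.card_pos)
  by_cases hcap : p.1 0 = p.2
  · simp only [ccStep_of_captured ⟨0, hcap⟩]
    refine PMF.le_tsum_mul_of_forall_le _ fun _ => PMF.le_tsum_mul_of_forall_le _ fun _ => ?_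
    simp [captureBound, hcap]
  by_cases hwin : CopWinsWithin G (k + 1) (p.1 0) p.2
  · rw [captureBound, if_neg hcap, if_pos hwin, pow_succ']
    refine PMF.le_tsum_mul_tsum_mul_of_forall_exists _ _ fun w => ?_
    obtain ⟨u, hu⟩ := exists_copWinsWithin_ccStep hwin w
    exact ⟨u, by rw [uniformCop_apply]; exact mul_le_mul_right (pow_le_captureBound hδ hu) _⟩
  · simp [captureBound, hcap, hwin]

variable (G) in
lemma tsum_ccPlay_mul_captureBound_le [Nonempty V] (πR : CCRob V 1) (init : PosK V 1)
    (t k : ℕ) :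
    ∑' h, ccPlay G uniformCop πR init t h *
        captureBound G (Fintype.card V)⁻¹ k (h.getLast?.getD init) ≤
      ∑' h, ccPlay G uniformCop πR init (t + k) h *
        captureBound G (Fintype.card V)⁻¹ 0 (h.getLast?.getD init) := by
  induction k generalizing t with
  | zero => rfl
  | succ k ih =>
    refine le_trans ?_ ((ih (t + 1)).trans_eq (by rw [Nat.add_right_comm, Nat.add_assoc]))
    simp only [ccPlay, PMF.tsum_bind_mul, PMF.tsum_pure_mul, List.getLast?_concat,
      Option.getD_some]
    exact ENNReal.tsum_le_tsum fun h => mul_le_mul_right (captureBound_succ_le h _ k _) _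

lemma ccFreeProb_eq_tsum (πC : CCCop V 1) (πR : CCRob V 1) (init : PosK V 1) (t : ℕ) :
    ccFreeProb G πC πR init t = ∑' h, ccPlay G πC πR init t h *
      if (h.getLast?.getD init).1 0 = (h.getLast?.getD init).2 then 0 else 1 := by
  rw [ccFreeProb, PMF.toOuterMeasure_apply]
  refine tsum_congr fun h => ?_
  by_cases hh : (h.getLast?.getD init).1 0 = (h.getLast?.getD init).2 <;>
    simp [Fin.forall_fin_one, hh]

variable (G) in
def ccCaptureProb (πC : CCCop V 1) (πR : CCRob V 1) (init : PosK V 1) (t : ℕ) : ℝ≥0∞ :=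
  ∑' h, ccPlay G πC πR init t h *
    if (h.getLast?.getD init).1 0 = (h.getLast?.getD init).2 then 1 else 0

lemma ccCaptureProb_add_ccFreeProb (πC : CCCop V 1) (πR : CCRob V 1) (init : PosK V 1)
    (t : ℕ) : ccCaptureProb G πC πR init t + ccFreeProb G πC πR init t = 1 := by
  rw [ccCaptureProb, ccFreeProb_eq_tsum, ← ENNReal.tsum_add, ← (ccPlay G πC πR init t).tsum_coe]
  refine tsum_congr fun h => ?_
  split_ifs <;> simp

lemma ccFreeProb_ne_top (πC : CCCop V 1) (πR : CCRob V 1) (init : PosK V 1) (t : ℕ) :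
    ccFreeProb G πC πR init t ≠ ⊤ :=
  ne_top_of_le_ne_top ENNReal.one_ne_top
    (ccCaptureProb_add_ccFreeProb (G := G) πC πR init t ▸ le_add_self)

lemma ccCaptureProb_add_le [Nonempty V] {B : ℕ} (hB : ∀ c r, CopWinsWithin G B c r)
    (πR : CCRob V 1) (init : PosK V 1) (t : ℕ) :
    ccCaptureProb G uniformCop πR init t +
        (Fintype.card V : ℝ≥0∞)⁻¹ ^ B * ccFreeProb G uniformCop πR init t ≤
      ccCaptureProb G uniformCop πR init (t + B) := by
  have := tsum_ccPlay_mul_captureBound_le G πR init t B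
  simp only [captureBound_of_forall hB, captureBound_zero, mul_add, ENNReal.tsum_add,
    mul_left_comm _ ((Fintype.card V : ℝ≥0∞)⁻¹ ^ B), ENNReal.tsum_mul_left] at this
  rwa [ccCaptureProb, ccCaptureProb, ccFreeProb_eq_tsum]

lemma ccFreeProb_add_le [Nonempty V] {B : ℕ} (hB : ∀ c r, CopWinsWithin G B c r)
    (πR : CCRob V 1) (init : PosK V 1) (t : ℕ) :
    ccFreeProb G uniformCop πR init (t + B) +
        (Fintype.card V : ℝ≥0∞)⁻¹ ^ B * ccFreeProb G uniformCop πR init t ≤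
      ccFreeProb G uniformCop πR init t := by
  have hsum := ccCaptureProb_add_ccFreeProb (G := G) uniformCop πR init
  have hcapt : ccCaptureProb G uniformCop πR init t ≠ ⊤ :=
    ne_top_of_le_ne_top ENNReal.one_ne_top (hsum t ▸ le_self_add)
  refine (ENNReal.add_le_add_iff_left hcapt).1 ?_
  calc _ ≤ ccCaptureProb G uniformCop πR init (t + B) +
        ccFreeProb G uniformCop πR init (t + B) := by
        rw [add_left_comm, add_comm (ccFreeProb _ _ _ _ _)]
        exact add_le_add_left (ccCaptureProb_add_le hB πR init t) _
    _ = _ := by rw [hsum, hsum]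

theorem iInf_ccFreeProb_uniformCop [Nonempty V] {B : ℕ} (hB : ∀ c r, CopWinsWithin G B c r)
    (init : PosK V 1) (πR : CCRob V 1) :
    ⨅ t, ccFreeProb G uniformCop πR init t = 0 :=
  ENNReal.iInf_eq_zero_of_add_mul_le (ccFreeProb_ne_top _ _ _ 0)
    (pow_ne_zero _ (ENNReal.inv_ne_zero.2 (ENNReal.natCast_ne_top _)))
    (ccFreeProb_add_le hB πR init)

end Concurrent

lemma not_ccCopWin_zero [Nonempty V] (G : SimpleGraph V) [DecidableRel G.Adj] :
    ¬ccCopWin G 0 := by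
  rintro ⟨πC, hπC⟩
  let init : PosK V 0 := (Fin.elim0, Classical.arbitrary V)
  have hfree (t : ℕ) : ccFreeProb G πC (fun _ => PMF.pure init.2) init t = 1 := by
    rw [ccFreeProb, PMF.toOuterMeasure_apply_eq_one_iff]
    exact fun _ _ i => i.elim0
  simpa [hfree] using hπC init fun _ => PMF.pure init.2

/-- if `c(G) = 1` then `c̃(G) = 1`; moreover there is a memoryless
randomized cop strategy under which, for every initial position and every robber
strategy in the concurrent game, capture occurs with probability one. -/
theorem ccopNumber_eq_one_of_copNumber_eq_one (G : SimpleGraph V) [DecidableRel G.Adj]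
    (hconn : G.Connected) (h : copNumber G = 1) :
    ccopNumber G = 1 ∧
      ∃ πC : CCCop V 1, MemorylessK πC ∧
        ∀ init : PosK V 1, ∀ πR : CCRob V 1,
          (⨅ t : ℕ, ccFreeProb G πC πR init t) = 0 := by
  have : Nonempty V := hconn.nonempty
  have htb : tbCopWin G 1 := h ▸ Nat.sInf_mem (Nat.nonempty_of_pos_sInf (h ▸ one_pos))
  obtain ⟨c₀, hc₀⟩ := exists_forall_copCanWin_of_tbCopWin htb
  obtain ⟨B, hB⟩ := exists_forall_copWinsWithin hconn hc₀
  have hcc : ccCopWin G 1 := ⟨uniformCop, iInf_ccFreeProb_uniformCop hB⟩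
  refine ⟨le_antisymm (Nat.sInf_le hcc) (Nat.one_le_iff_ne_zero.2 fun h0 => ?_),
    uniformCop, fun _ _ _ => rfl, iInf_ccFreeProb_uniformCop hB⟩
  rcases Nat.sInf_eq_zero.1 h0 with h0 | h0
  · exact not_ccCopWin_zero G h0
  · exact h0.subset hcc
end
end

section
/- For every finite, simple, connected, undirected graph G and every positive integer K: if the concurrent cop number c̃(G) equals K, then the cop number satisfies c(G) ≤ K. -/
open Finset Filter

noncomputable section

variable {V : Type*} [Fintype V] [DecidableEq V]

/-!
Let `A n` be the set of turn-based positions, cops to move, from which the cops force a capture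
within `n + 1` moves. If every position lies in some `A n`, the cops win the turn-based game by
always moving to a position of smaller rank. Otherwise, since closed neighbourhoods are finite,
the robber can answer every cop move from outside `⋃ A n` by staying outside. In the
concurrent game he plays this answer against the cops' *current* tuple, as if it had just been
played: his new vertex is then adjacent to no cop, which rules out both an ordinary and an
en passant capture, whatever the cops do. So this deterministic robber escapes surely, and a
concurrent cop win with `K` cops gives a turn-based one.
-/

section Attractor

variable (G : SimpleGraph V) [DecidableRel G.Adj] {K : ℕ}

lemma mem_nbhd_self (u : V) : u ∈ nbhd G u :=
  Finset.mem_insert_self u _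

def CopMoveForces (S : Set (PosK V K)) (p : PosK V K) (C : Fin K → V) : Prop :=
  (∀ i, C i ∈ nbhd G (p.1 i)) ∧ ∀ r ∈ nbhd G p.2, (C, r) ∈ S

variable (K) in
/-- The positions from which the cops, about to move, capture within `n + 1` moves. -/
def copAttractor : ℕ → Set (PosK V K)
  | 0 => {p | ∃ i, p.2 ∈ nbhd G (p.1 i)}
  | n + 1 => copAttractor n ∪ {p | ∃ C, CopMoveForces G (copAttractor n) p C}

lemma copAttractor_mono : Monotone (copAttractor G K) :=
  monotone_nat_of_le_succ fun _ => Set.subset_union_left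

lemma CopMoveForces.mono {S T : Set (PosK V K)} {p : PosK V K} {C : Fin K → V}
    (hC : CopMoveForces G S p C) (hST : S ⊆ T) : CopMoveForces G T p C :=
  ⟨hC.1, fun r hr => hST (hC.2 r hr)⟩

lemma exists_copMoveForces_of_mem_copAttractor_succ {p : PosK V K} {n : ℕ}
    (hp : p ∈ copAttractor G K (n + 1)) (hp₀ : p ∉ copAttractor G K 0) :
    ∃ C, CopMoveForces G (copAttractor G K n) p C := by
  induction n with
  | zero => exact hp.resolve_left hp₀
  | succ n ih =>
    rcases hp with hp | hp
    · obtain ⟨C, hC⟩ := ih hp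
      exact ⟨C, hC.mono G (copAttractor_mono G (Nat.le_succ n))⟩
    · exact hp

lemma notMem_nbhd_of_forall_notMem_copAttractor {p : PosK V K}
    (hp : ∀ n, p ∉ copAttractor G K n) (i : Fin K) : p.2 ∉ nbhd G (p.1 i) :=
  fun hi => hp 0 ⟨i, hi⟩

/-- Finiteness of `N[r]` bounds the ranks of all the robber's answers at once. -/
lemma exists_mem_nbhd_forall_notMem_copAttractor {p : PosK V K}
    (hp : ∀ n, p ∉ copAttractor G K n) (C : Fin K → V) (hC : ∀ i, C i ∈ nbhd G (p.1 i)) :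
    ∃ w ∈ nbhd G p.2, ∀ n, (C, w) ∉ copAttractor G K n := by
  by_contra! hcaught
  choose rank hrank using hcaught
  let m := (nbhd G p.2).attach.sup fun r => rank r.1 r.2
  refine hp (m + 1) (Or.inr ⟨C, hC, fun r hr => ?_⟩)
  exact copAttractor_mono G (Finset.le_sup (f := fun r => rank r.1 r.2) (mem_attach _ ⟨r, hr⟩))
    (hrank r hr)

end Attractor

section TurnBased

variable (G : SimpleGraph V) [DecidableRel G.Adj] {K : ℕ} (sc : TBCop V K) (sr : TBRob V K)

lemma tbPlay_getLast? (t : ℕ) : (tbPlay G sc sr t).getLast? = some (tbPos G sc sr t) := by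
  cases t <;> simp [tbPos, tbPlay]

lemma tbPos_succ_fst (t : ℕ)
    (hlegal : ∀ i, sc.2 (tbPlay G sc sr t) i ∈ nbhd G ((tbPos G sc sr t).1 i)) :
    (tbPos G sc sr (t + 1)).1 = sc.2 (tbPlay G sc sr t) := by
  funext i
  simp only [tbPos, tbPlay, List.getLast?_append, List.getLast?_singleton, Option.some_or,
    Option.getD_some]
  exact if_pos (hlegal i)

lemma tbPos_succ_snd_mem_nbhd (t : ℕ) :
    (tbPos G sc sr (t + 1)).2 ∈ nbhd G (tbPos G sc sr t).2 := by
  simp only [tbPos, tbPlay, List.getLast?_append, List.getLast?_singleton, Option.some_or,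
    Option.getD_some]
  split_ifs with h
  · exact h
  · exact mem_nbhd_self G _

end TurnBased

section CopStrategy

variable (G : SimpleGraph V) [DecidableRel G.Adj] {K : ℕ}

open Classical in
def attractorMove (p : PosK V K) : Fin K → V :=
  if p ∈ copAttractor G K 0 then fun i => if p.2 ∈ nbhd G (p.1 i) then p.2 else p.1 i
  else if h : ∃ n C, CopMoveForces G (copAttractor G K n) p C then (Nat.find_spec h).choose
  else p.1

lemma attractorMove_mem_nbhd (p : PosK V K) (i : Fin K) :
    attractorMove G p i ∈ nbhd G (p.1 i) := by
  classical
  unfold attractorMove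
  split_ifs with h₀ hforce
  · dsimp only
    split_ifs with h
    exacts [h, mem_nbhd_self G _]
  · exact (Nat.find_spec hforce).choose_spec.1 i
  · exact mem_nbhd_self G _

lemma exists_attractorMove_eq {p : PosK V K} (hp : p ∈ copAttractor G K 0) :
    ∃ i, attractorMove G p i = p.2 := by
  obtain ⟨i, hi⟩ := hp
  refine ⟨i, ?_⟩
  simp [attractorMove, hi, show p ∈ copAttractor G K 0 from ⟨i, hi⟩]

lemma copMoveForces_attractorMove {p : PosK V K} {n : ℕ} (hp : p ∈ copAttractor G K (n + 1))
    (hp₀ : p ∉ copAttractor G K 0) :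
    CopMoveForces G (copAttractor G K n) p (attractorMove G p) := by
  classical
  have hforce : ∃ m C, CopMoveForces G (copAttractor G K m) p C :=
    ⟨n, exists_copMoveForces_of_mem_copAttractor_succ G hp hp₀⟩
  have hmin : Nat.find hforce ≤ n :=
    Nat.find_min' hforce (exists_copMoveForces_of_mem_copAttractor_succ G hp hp₀)
  rw [attractorMove, if_neg hp₀, dif_pos hforce]
  exact (Nat.find_spec hforce).choose_spec.mono G (copAttractor_mono G hmin)

def attractorStrategy (c₀ : Fin K → V) : TBCop V K :=
  (c₀, fun h => h.getLast?.elim c₀ (attractorMove G))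

lemma attractorStrategy_move (c₀ : Fin K → V) (sr : TBRob V K) (t : ℕ) :
    (attractorStrategy G c₀).2 (tbPlay G (attractorStrategy G c₀) sr t) =
      attractorMove G (tbPos G (attractorStrategy G c₀) sr t) := by
  simp [attractorStrategy, tbPlay_getLast?]

lemma tbCaptured_of_tbPos_mem_copAttractor (c₀ : Fin K → V) (sr : TBRob V K) (n : ℕ) :
    ∀ t, tbPos G (attractorStrategy G c₀) sr t ∈ copAttractor G K n →
      tbCaptured G (attractorStrategy G c₀) sr := by
  set sc := attractorStrategy G c₀
  have hcops (t : ℕ) : (tbPos G sc sr (t + 1)).1 = attractorMove G (tbPos G sc sr t) := by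
    rw [tbPos_succ_fst G sc sr t] <;> rw [attractorStrategy_move]
    exact attractorMove_mem_nbhd G _
  have hcapture (t : ℕ) (ht : tbPos G sc sr t ∈ copAttractor G K 0) : tbCaptured G sc sr := by
    obtain ⟨i, hi⟩ := exists_attractorMove_eq G ht
    exact ⟨t, i, Or.inr (by rw [hcops, hi])⟩
  induction n with
  | zero => exact hcapture
  | succ n ih =>
    intro t ht
    by_cases ht₀ : tbPos G sc sr t ∈ copAttractor G K 0
    · exact hcapture t ht₀
    · apply ih (t + 1)
      rw [← Prod.mk.eta (p := tbPos G sc sr (t + 1)), hcops]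
      exact (copMoveForces_attractorMove G ht ht₀).2 _ (tbPos_succ_snd_mem_nbhd G sc sr t)

lemma tbCopWin_of_forall_exists_mem_copAttractor (c₀ : Fin K → V)
    (hall : ∀ p, ∃ n, p ∈ copAttractor G K n) : tbCopWin G K :=
  ⟨attractorStrategy G c₀, fun sr =>
    let ⟨n, hn⟩ := hall (tbPos G (attractorStrategy G c₀) sr 0)
    tbCaptured_of_tbPos_mem_copAttractor G c₀ sr n 0 hn⟩

end CopStrategy

section Concurrent

variable (G : SimpleGraph V) [DecidableRel G.Adj] {K : ℕ}

lemma ccPlay_support_invariant (P : PosK V K → Prop) (πC : CCCop V K)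
    (πR : CCRob V K) (init : PosK V K) (hinit : P init)
    (hstep : ∀ h, P (h.getLast?.getD init) → ∀ u ∈ (πC h).support, ∀ w ∈ (πR h).support,
      P (ccStep G (h.getLast?.getD init) u w)) (t : ℕ) :
    ∀ h ∈ (ccPlay G πC πR init t).support, P (h.getLast?.getD init) := by
  induction t with
  | zero =>
    intro h hh
    rw [ccPlay, PMF.support_pure, Set.mem_singleton_iff] at hh
    simpa [hh] using hinit
  | succ t ih =>
    intro h hh
    simp only [ccPlay, PMF.support_bind, PMF.support_pure, Set.mem_iUnion,
      Set.mem_singleton_iff] at hh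
    obtain ⟨h', hh', u, hu, w, hw, rfl⟩ := hh
    simpa using hstep h' (ih h' hh') u hu w hw

lemma ccFreeProb_eq_one_of_invariant (P : PosK V K → Prop) (πC : CCCop V K)
    (πR : CCRob V K) (init : PosK V K) (hinit : P init)
    (hstep : ∀ h, P (h.getLast?.getD init) → ∀ u ∈ (πC h).support, ∀ w ∈ (πR h).support,
      P (ccStep G (h.getLast?.getD init) u w))
    (hfree : ∀ p, P p → ∀ i, p.1 i ≠ p.2) (t : ℕ) :
    ccFreeProb G πC πR init t = 1 := by
  rw [ccFreeProb, PMF.toOuterMeasure_apply_eq_one_iff]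
  exact fun h hh => hfree _ (ccPlay_support_invariant G P πC πR init hinit hstep t h hh)

def EscapeInvariant (q : PosK V K) : Prop :=
  ∃ C : Fin K → V, (∀ i, q.1 i ∈ nbhd G (C i)) ∧ ∀ n, (C, q.2) ∉ copAttractor G K n

open Classical in
def escapeMove (q : PosK V K) : V :=
  if hq : ∃ w ∈ nbhd G q.2, ∀ n, (q.1, w) ∉ copAttractor G K n then hq.choose else q.2

variable {G}

lemma EscapeInvariant.ne {q : PosK V K} (hq : EscapeInvariant G q) (i : Fin K) :
    q.1 i ≠ q.2 := by
  obtain ⟨C, hC, hsafe⟩ := hq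
  intro hi
  exact notMem_nbhd_of_forall_notMem_copAttractor G hsafe i (hi ▸ hC i)

lemma EscapeInvariant.ccStep {q : PosK V K} (hq : EscapeInvariant G q) (u : Fin K → V) :
    EscapeInvariant G (ccStep G q u (escapeMove G q)) := by
  obtain ⟨C, hC, hsafe⟩ := hq
  have hex := exists_mem_nbhd_forall_notMem_copAttractor G hsafe q.1 hC
  obtain ⟨hw, hwsafe⟩ := hex.choose_spec
  have hmove : escapeMove G q = hex.choose := dif_pos hex
  have hnot_captured : ¬ ∃ i, q.1 i = q.2 := fun ⟨i, hi⟩ =>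
    EscapeInvariant.ne ⟨C, hC, hsafe⟩ i hi
  have hno_swap (i : Fin K) : hex.choose ≠ q.1 i := fun hi =>
    notMem_nbhd_of_forall_notMem_copAttractor G hwsafe i (hi ▸ mem_nbhd_self G (q.1 i))
  simp only [_root_.ccStep, if_neg hnot_captured, hmove, if_pos hw]
  rw [if_neg fun ⟨i, _, hi⟩ => hno_swap i hi]
  refine ⟨q.1, fun i => ?_, hwsafe⟩
  dsimp only
  split_ifs with hu
  exacts [hu, mem_nbhd_self G _]

lemma not_ccCopWin_of_forall_notMem_copAttractor {p₀ : PosK V K}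
    (hp₀ : ∀ n, p₀ ∉ copAttractor G K n) : ¬ ccCopWin G K := by
  rintro ⟨πC, hπC⟩
  let πR : CCRob V K := fun h => PMF.pure (escapeMove G (h.getLast?.getD p₀))
  have hfree := ccFreeProb_eq_one_of_invariant G (EscapeInvariant G) πC πR p₀
    ⟨p₀.1, fun i => mem_nbhd_self G _, hp₀⟩
    (fun h hh u _ w hw => (PMF.mem_support_pure_iff _ _).1 hw ▸ hh.ccStep u)
    (fun _ hp => hp.ne)
  simpa [hfree] using hπC p₀ πR

end Concurrent

theorem tbCopWin_of_ccCopWin (G : SimpleGraph V) [DecidableRel G.Adj] {K : ℕ}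
    (hcc : ccCopWin G K) : tbCopWin G K := by
  obtain ⟨c₀, -⟩ := (hcc.choose []).support_nonempty
  refine tbCopWin_of_forall_exists_mem_copAttractor G c₀ fun p => ?_
  by_contra! hp
  exact not_ccCopWin_of_forall_notMem_copAttractor hp hcc

theorem copNumber_le_of_ccopNumber_eq_general (G : SimpleGraph V) [DecidableRel G.Adj]
    (K : ℕ) (hK : 0 < K) (h : ccopNumber G = K) :
    copNumber G ≤ K := by
  have hcc : ccCopWin G K := h ▸ Nat.sInf_mem (Nat.nonempty_of_pos_sInf (h ▸ hK))
  exact Nat.sInf_le (tbCopWin_of_ccCopWin G hcc)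

/-- if the concurrent cop number `c̃(G)` equals `K > 0` then the cop
number satisfies `c(G) ≤ K`. -/
theorem copNumber_le_of_ccopNumber_eq (G : SimpleGraph V) [DecidableRel G.Adj]
    (hconn : G.Connected) (K : ℕ) (hK : 0 < K) (h : ccopNumber G = K) :
    copNumber G ≤ K :=
  copNumber_le_of_ccopNumber_eq_general G K hK h
end
end
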